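/- arXiv:1003.5061 — 5 statements merged into one kernel-verified Lean document; each statement's English description precedes it below -/
import Mathlib

section
/- Entropic uncertainty principle (Maassen–Uffink): Let H and H̃ be complex Hilbert spaces, let U be a unitary operator on H̃, and let (π_i)_{i=1}^D be a finite family of bounded operators from H̃ to H satisfying the partition-of-identity property Σ_{i=1}^D π_i† π_i = Id_{H̃}. Then for every unit vector ψ ∈ H̃ one has Σ_{i=1}^D η(‖π_i ψ‖_H²) + Σ_{i=1}^D η(‖π_i U ψ‖_H²) ≥ −2 log max_{1≤i,j≤D} ‖π_i U π_j†‖_{L(H)}, where π† denotes the Hilbert-space adjoint and ‖·‖_{L(H)} the operator norm. -/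
/-!
For `0 < θ < 1` let `p = 2 / (1 + θ)` and `p' = 2 / (1 - θ)`. The bilinear form with blocks
`π j U π i†` has norm at most `1` on `ℓ²` (`U` is an isometry and the `π i` partition the
identity), and each block has norm at most `c = max ‖π i U π j†‖`. Riesz–Thorin interpolation
between these two bounds, through Hadamard's three lines theorem, gives the Hausdorff–Young
inequality `‖(π j (U ψ))_j‖_{p'} ≤ c ^ θ ‖(π i ψ)_i‖_p`. In logarithmic form this is the Rényi
uncertainty relation `H_{1/(1+θ)} + H_{1/(1-θ)} ≥ -2 log c`, and as `θ → 0` the Rényi entropies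
tend to the Shannon entropies.
-/

open scoped ComplexConjugate
open ContinuousLinearMap

/-- `η(x) = -x log x` (with `η(0) = 0`, since `Real.log 0 = 0`). -/
noncomputable def eta (x : ℝ) : ℝ := -(x * Real.log x)

open Filter Topology

lemma rpow_le_one_add_rpow {t s S : ℝ} (ht : 0 ≤ t) (hs : 0 ≤ s) (hsS : s ≤ S) :
    t ^ s ≤ 1 + t ^ S := by
  rcases le_total t 1 with ht1 | ht1
  · linarith [Real.rpow_le_one ht ht1 hs, Real.rpow_nonneg ht S]
  · linarith [Real.rpow_le_rpow_of_exponent_le ht1 hsS]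

lemma rpow_le_of_le_mul_rpow {Q K θ : ℝ} (hQ : 0 ≤ Q) (hK : 0 ≤ K) (hθ : θ < 1)
    (h : Q ≤ K * Q ^ ((1 + θ) / 2)) : Q ^ ((1 - θ) / 2) ≤ K := by
  rcases hQ.eq_or_lt with rfl | hQ
  · rwa [Real.zero_rpow (by linarith)]
  · have hsplit : Q = Q ^ ((1 - θ) / 2) * Q ^ ((1 + θ) / 2) := by
      rw [← Real.rpow_add hQ]; ring_nf; rw [Real.rpow_one]
    have h' : Q ^ ((1 - θ) / 2) * Q ^ ((1 + θ) / 2) ≤ K * Q ^ ((1 + θ) / 2) := by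
      rwa [← hsplit]
    exact le_of_mul_le_mul_right h' (by positivity)

section RieszThorin

open Complex HadamardThreeLines

variable {ι κ : Type*} [Fintype ι] [Fintype κ] {θ : ℝ}

lemma re_one_add_div (z : ℂ) : ((1 + z) / (1 + θ)).re = (1 + z.re) / (1 + θ) := by
  rw [← ofReal_one, ← ofReal_add, div_ofReal_re]; simp

lemma norm_ofReal_cpow_one_add_div {t : ℝ} (ht : 0 ≤ t) (hθ : 0 ≤ θ) {z : ℂ} (hz : 0 ≤ z.re) :
    ‖(t : ℂ) ^ ((1 + z) / (1 + θ))‖ = t ^ ((1 + z.re) / (1 + θ)) := by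
  rw [norm_cpow_eq_rpow_re_of_nonneg ht, re_one_add_div]
  rw [re_one_add_div]; positivity

lemma differentiableOn_ofReal_cpow_one_add_div (t : ℝ) (hθ : 0 ≤ θ) :
    DifferentiableOn ℂ (fun z : ℂ => (t : ℂ) ^ ((1 + z) / (1 + θ))) (re ⁻¹' Set.Ici 0) := by
  intro z hz
  refine (DifferentiableAt.const_cpow (by fun_prop) (Or.inr fun h => ?_)).differentiableWithinAt
  have := congrArg re h
  rw [re_one_add_div, zero_re] at this
  have : 0 < (1 + z.re) / (1 + θ) := by have : 0 ≤ z.re := hz; positivity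
  linarith

/-- The exponent `(1 + z) / (1 + θ)` is `1` at `z = θ`; with `p = 2 / (1 + θ)`, it makes
`|x ^ _| ^ 2 = x ^ p` on the line `re z = 0` and `|x ^ _| = x ^ p` on the line `re z = 1`. -/
noncomputable def interpolant (θ : ℝ) (a : ι → κ → ℂ) (x : ι → ℝ) (y : κ → ℝ) (z : ℂ) : ℂ :=
  ∑ i, ∑ j, (x i : ℂ) ^ ((1 + z) / (1 + θ)) * (y j : ℂ) ^ ((1 + z) / (1 + θ)) * a i j

variable {a : ι → κ → ℂ} {x : ι → ℝ} {y : κ → ℝ}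

lemma interpolant_ofReal_self (hθ : 0 ≤ θ) :
    interpolant θ a x y θ = ∑ i, ∑ j, (x i : ℂ) * y j * a i j := by
  have : (1 + (θ : ℂ)) / (1 + θ) = 1 := div_self (by exact_mod_cast (by linarith : 1 + θ ≠ 0))
  simp only [interpolant, this, cpow_one]

lemma diffContOnCl_interpolant (hθ : 0 ≤ θ) :
    DiffContOnCl ℂ (interpolant θ a x y) (verticalStrip 0 1) := by
  refine DifferentiableOn.diffContOnCl ?_
  have : closure (verticalStrip 0 1) ⊆ re ⁻¹' Set.Ici 0 := by
    rw [verticalStrip, closure_preimage_re, closure_Ioo zero_ne_one]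
    exact fun z hz => hz.1
  refine DifferentiableOn.mono ?_ this
  refine DifferentiableOn.fun_sum fun i _ => DifferentiableOn.fun_sum fun j _ => ?_
  exact ((differentiableOn_ofReal_cpow_one_add_div _ hθ).mul
    (differentiableOn_ofReal_cpow_one_add_div _ hθ)).mul_const _

lemma bddAbove_norm_interpolant (hθ : 0 ≤ θ) (hx : ∀ i, 0 ≤ x i) (hy : ∀ j, 0 ≤ y j) :
    BddAbove ((norm ∘ interpolant θ a x y) '' verticalClosedStrip 0 1) := by
  have hnorm {t : ℝ} (ht : 0 ≤ t) {z : ℂ} (hz : z.re ∈ Set.Icc (0 : ℝ) 1) :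
      ‖(t : ℂ) ^ ((1 + z) / (1 + θ))‖ ≤ 1 + t ^ (2 : ℝ) := by
    rw [norm_ofReal_cpow_one_add_div ht hθ hz.1]
    apply rpow_le_one_add_rpow ht
    · exact div_nonneg (by linarith [hz.1]) (by linarith)
    · rw [div_le_iff₀ (by linarith)]
      nlinarith [hz.1, hz.2]
  refine ⟨∑ i, ∑ j, (1 + x i ^ (2 : ℝ)) * (1 + y j ^ (2 : ℝ)) * ‖a i j‖, ?_⟩
  rintro _ ⟨z, hz, rfl⟩
  refine (norm_sum_le _ _).trans <| Finset.sum_le_sum fun i _ =>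
    (norm_sum_le _ _).trans <| Finset.sum_le_sum fun j _ => ?_
  rw [norm_mul, norm_mul]
  have := hx i; have := hy j
  gcongr
  exacts [hnorm (hx i) hz, hnorm (hy j) hz]

lemma norm_interpolant_le_of_re_eq_zero (hθ : 0 ≤ θ)
    (h₂ : ∀ (μ : ι → ℂ) (ν : κ → ℂ),
      ‖∑ i, ∑ j, μ i * ν j * a i j‖ ≤ √(∑ i, ‖μ i‖ ^ 2) * √(∑ j, ‖ν j‖ ^ 2))
    (hx : ∀ i, 0 ≤ x i) (hy : ∀ j, 0 ≤ y j) {z : ℂ} (hz : z.re = 0) :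
    ‖interpolant θ a x y z‖ ≤
      √(∑ i, x i ^ (2 / (1 + θ))) * √(∑ j, y j ^ (2 / (1 + θ))) := by
  have hsq {t : ℝ} (ht : 0 ≤ t) :
      ‖(t : ℂ) ^ ((1 + z) / (1 + θ))‖ ^ 2 = t ^ (2 / (1 + θ)) := by
    rw [norm_ofReal_cpow_one_add_div ht hθ hz.ge, hz, ← Real.rpow_mul_natCast ht]
    ring_nf
  simpa only [interpolant, hsq (hx _), hsq (hy _)] using
    h₂ (fun i => (x i : ℂ) ^ ((1 + z) / (1 + θ))) (fun j => (y j : ℂ) ^ ((1 + z) / (1 + θ)))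

lemma norm_interpolant_le_of_re_eq_one (hθ : 0 ≤ θ) {c : ℝ} (h₁ : ∀ i j, ‖a i j‖ ≤ c)
    (hx : ∀ i, 0 ≤ x i) (hy : ∀ j, 0 ≤ y j) {z : ℂ} (hz : z.re = 1) :
    ‖interpolant θ a x y z‖ ≤
      c * (∑ i, x i ^ (2 / (1 + θ))) * ∑ j, y j ^ (2 / (1 + θ)) := by
  have hpow {t : ℝ} (ht : 0 ≤ t) : ‖(t : ℂ) ^ ((1 + z) / (1 + θ))‖ = t ^ (2 / (1 + θ)) := by
    rw [norm_ofReal_cpow_one_add_div ht hθ (by rw [hz]; norm_num), hz, one_add_one_eq_two]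
  calc ‖interpolant θ a x y z‖
      ≤ ∑ i, ∑ j, x i ^ (2 / (1 + θ)) * y j ^ (2 / (1 + θ)) * c := by
        refine (norm_sum_le _ _).trans <| Finset.sum_le_sum fun i _ =>
          (norm_sum_le _ _).trans <| Finset.sum_le_sum fun j _ => ?_
        rw [norm_mul, norm_mul, hpow (hx i), hpow (hy j)]
        have := hx i; have := hy j
        gcongr
        exact h₁ i j
    _ = c * (∑ i, x i ^ (2 / (1 + θ))) * ∑ j, y j ^ (2 / (1 + θ)) := by
        rw [mul_assoc, Finset.sum_mul_sum, Finset.mul_sum]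
        refine Finset.sum_congr rfl fun i _ => ?_
        rw [Finset.mul_sum]
        exact Finset.sum_congr rfl fun j _ => by ring

theorem norm_sum_sum_mul_le_of_interpolation {c : ℝ} (hc : 0 ≤ c) (hθ0 : 0 ≤ θ) (hθ1 : θ ≤ 1)
    (h₂ : ∀ (μ : ι → ℂ) (ν : κ → ℂ),
      ‖∑ i, ∑ j, μ i * ν j * a i j‖ ≤ √(∑ i, ‖μ i‖ ^ 2) * √(∑ j, ‖ν j‖ ^ 2))
    (h₁ : ∀ i j, ‖a i j‖ ≤ c) (hx : ∀ i, 0 ≤ x i) (hy : ∀ j, 0 ≤ y j) :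
    ‖∑ i, ∑ j, (x i : ℂ) * y j * a i j‖ ≤ c ^ θ *
      (∑ i, x i ^ (2 / (1 + θ))) ^ ((1 + θ) / 2) * (∑ j, y j ^ (2 / (1 + θ))) ^ ((1 + θ) / 2) := by
  set A := ∑ i, x i ^ (2 / (1 + θ))
  set B := ∑ j, y j ^ (2 / (1 + θ))
  have hA : 0 ≤ A := Finset.sum_nonneg fun i _ => by have := hx i; positivity
  have hB : 0 ≤ B := Finset.sum_nonneg fun j _ => by have := hy j; positivity
  have := norm_le_interp_of_mem_verticalClosedStrip₀₁' (interpolant θ a x y)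
    (show (θ : ℂ) ∈ verticalClosedStrip 0 1 from ⟨hθ0, hθ1⟩) (diffContOnCl_interpolant hθ0)
    (bddAbove_norm_interpolant hθ0 hx hy)
    (fun z hz => norm_interpolant_le_of_re_eq_zero hθ0 h₂ hx hy hz)
    (fun z hz => norm_interpolant_le_of_re_eq_one hθ0 h₁ hx hy hz)
  rw [interpolant_ofReal_self hθ0, ofReal_re] at this
  refine this.trans_eq ?_
  have hexp : (1 - θ) / 2 + θ ≠ 0 := by linarith
  rw [Real.sqrt_eq_rpow, Real.sqrt_eq_rpow, Real.mul_rpow (by positivity) (by positivity),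
    ← Real.rpow_mul hA, ← Real.rpow_mul hB, Real.mul_rpow (by positivity) hB,
    Real.mul_rpow hc hA]
  calc A ^ (1 / 2 * (1 - θ)) * B ^ (1 / 2 * (1 - θ)) * (c ^ θ * A ^ θ * B ^ θ)
      = c ^ θ * A ^ ((1 - θ) / 2 + θ) * B ^ ((1 - θ) / 2 + θ) := by
        rw [Real.rpow_add' hA hexp, Real.rpow_add' hB hexp]; ring_nf
    _ = _ := by ring_nf

end RieszThorin

def IsPartitionOfIdentity {ι E F : Type*} [Fintype ι]
    [NormedAddCommGroup E] [InnerProductSpace ℂ E] [CompleteSpace E]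
    [NormedAddCommGroup F] [InnerProductSpace ℂ F] [CompleteSpace F]
    (π : ι → E →L[ℂ] F) : Prop :=
  ∑ i, adjoint (π i) ∘L π i = ContinuousLinearMap.id ℂ E

section Hilbert

variable {ι κ E E' F F' : Type*} [Fintype ι] [Fintype κ]
  [NormedAddCommGroup E] [InnerProductSpace ℂ E] [NormedAddCommGroup E'] [InnerProductSpace ℂ E']
  [NormedAddCommGroup F] [InnerProductSpace ℂ F] [NormedAddCommGroup F'] [InnerProductSpace ℂ F']

lemma norm_smul_sq_le_of_norm_le_one (w : ℂ) {x : E} (hx : ‖x‖ ≤ 1) :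
    ‖w • x‖ ^ 2 ≤ ‖w‖ ^ 2 := by
  rw [norm_smul]
  exact pow_le_pow_left₀ (by positivity) (mul_le_of_le_one_right (norm_nonneg w) hx) 2

lemma norm_normalize_le_one (x : E) : ‖NormedSpace.normalize x‖ ≤ 1 := by
  by_cases hx : x = 0
  · simp [hx]
  · exact (NormedSpace.norm_normalize_eq_one_iff.mpr hx).le

lemma ofReal_norm_smul_normalize (x : E) :
    ((‖x‖ : ℝ) : ℂ) • NormedSpace.normalize x = x := by
  rw [Complex.coe_smul, NormedSpace.norm_smul_normalize]

lemma inner_normalize_self (x : E) : inner ℂ (NormedSpace.normalize x) x = ‖x‖ := by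
  rw [NormedSpace.normalize, ← Complex.coe_smul, inner_smul_left, Complex.conj_ofReal,
    inner_self_eq_norm_sq_to_K]
  by_cases hx : x = 0
  · simp [hx]
  · have : (‖x‖ : ℂ) ≠ 0 := by simpa using hx
    rw [Complex.ofReal_inv, sq, ← mul_assoc]
    simp [this]

variable [CompleteSpace E] [CompleteSpace E'] [CompleteSpace F] [CompleteSpace F']

lemma sum_sum_mul_inner_adjoint_eq (π : ι → E →L[ℂ] F) (σ : κ → E →L[ℂ] F')
    (e : ι → F) (f : κ → F') (μ : ι → ℂ) (ν : κ → ℂ) :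
    ∑ i, ∑ j, μ i * ν j * inner ℂ (f j) (σ j (adjoint (π i) (e i))) =
      inner ℂ (∑ j, adjoint (σ j) (conj (ν j) • f j)) (∑ i, adjoint (π i) (μ i • e i)) := by
  simp only [sum_inner, inner_sum, adjoint_inner_left, map_smul, inner_smul_left,
    inner_smul_right, Complex.conj_conj, Finset.mul_sum]
  exact Finset.sum_congr rfl fun i _ => Finset.sum_congr rfl fun j _ => by ring

namespace IsPartitionOfIdentity

variable {π : ι → E →L[ℂ] F} {σ : κ → E →L[ℂ] F'}

lemma sum_adjoint_apply (hπ : IsPartitionOfIdentity π) (x : E) :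
    ∑ i, adjoint (π i) (π i x) = x := by
  simpa using congr($hπ x)

lemma sum_norm_sq (hπ : IsPartitionOfIdentity π) (x : E) : ∑ i, ‖π i x‖ ^ 2 = ‖x‖ ^ 2 := by
  have := congrArg (fun y => RCLike.re (inner ℂ y x)) (hπ.sum_adjoint_apply x)
  simpa [sum_inner, adjoint_inner_left, ← Complex.ofReal_pow] using this

lemma comp_right (hπ : IsPartitionOfIdentity π) {U : E' →L[ℂ] E}
    (hU : adjoint U ∘L U = ContinuousLinearMap.id ℂ E') :
    IsPartitionOfIdentity fun i => π i ∘L U :=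
  calc ∑ i, adjoint (π i ∘L U) ∘L (π i ∘L U)
      = adjoint U ∘L (∑ i, adjoint (π i) ∘L π i) ∘L U := by
        simp only [adjoint_comp, finsetSum_comp, comp_finsetSum, comp_assoc]
    _ = ContinuousLinearMap.id ℂ E' := by rw [hπ, id_comp, hU]

lemma norm_sum_adjoint_le (hπ : IsPartitionOfIdentity π) (w : ι → F) :
    ‖∑ i, adjoint (π i) (w i)‖ ≤ √(∑ i, ‖w i‖ ^ 2) := by
  set X := ∑ i, adjoint (π i) (w i)
  have hX : ‖X‖ ^ 2 ≤ √(∑ i, ‖w i‖ ^ 2) * ‖X‖ :=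
    calc ‖X‖ ^ 2 = ∑ i, RCLike.re (inner ℂ (w i) (π i X)) := by
          simp only [X, ← inner_self_eq_norm_sq (𝕜 := ℂ), sum_inner, adjoint_inner_left, map_sum]
      _ ≤ ∑ i, ‖w i‖ * ‖π i X‖ := Finset.sum_le_sum fun i _ =>
          (RCLike.re_le_norm _).trans (norm_inner_le_norm _ _)
      _ ≤ √(∑ i, ‖w i‖ ^ 2) * √(∑ i, ‖π i X‖ ^ 2) := Real.sum_mul_le_sqrt_mul_sqrt _ _ _
      _ = √(∑ i, ‖w i‖ ^ 2) * ‖X‖ := by rw [hπ.sum_norm_sq, Real.sqrt_sq (norm_nonneg X)]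
  nlinarith [norm_nonneg X, Real.sqrt_nonneg (∑ i, ‖w i‖ ^ 2)]

lemma norm_sum_sum_mul_inner_adjoint_le (hπ : IsPartitionOfIdentity π)
    (hσ : IsPartitionOfIdentity σ) {e : ι → F} {f : κ → F'} (he : ∀ i, ‖e i‖ ≤ 1)
    (hf : ∀ j, ‖f j‖ ≤ 1) (μ : ι → ℂ) (ν : κ → ℂ) :
    ‖∑ i, ∑ j, μ i * ν j * inner ℂ (f j) (σ j (adjoint (π i) (e i)))‖ ≤
      √(∑ i, ‖μ i‖ ^ 2) * √(∑ j, ‖ν j‖ ^ 2) := by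
  rw [sum_sum_mul_inner_adjoint_eq, mul_comm]
  refine (norm_inner_le_norm _ _).trans (mul_le_mul ?_ ?_ (norm_nonneg _) (Real.sqrt_nonneg _))
  · refine (hσ.norm_sum_adjoint_le _).trans (Real.sqrt_le_sqrt (Finset.sum_le_sum fun j _ => ?_))
    simpa using norm_smul_sq_le_of_norm_le_one (conj (ν j)) (hf j)
  · exact (hπ.norm_sum_adjoint_le _).trans (Real.sqrt_le_sqrt
      (Finset.sum_le_sum fun i _ => norm_smul_sq_le_of_norm_le_one (μ i) (he i)))

theorem hausdorff_young (hπ : IsPartitionOfIdentity π) (hσ : IsPartitionOfIdentity σ)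
    {c θ : ℝ} (hc : 0 ≤ c) (hθ0 : 0 ≤ θ) (hθ1 : θ < 1)
    (hσπ : ∀ i j, ‖σ j ∘L adjoint (π i)‖ ≤ c) (ψ : E) :
    (∑ j, ‖σ j ψ‖ ^ (2 / (1 - θ))) ^ ((1 - θ) / 2) ≤
      c ^ θ * (∑ i, ‖π i ψ‖ ^ (2 / (1 + θ))) ^ ((1 + θ) / 2) := by
  set a : ι → κ → ℂ := fun i j => inner ℂ (NormedSpace.normalize (σ j ψ))
    (σ j (adjoint (π i) (NormedSpace.normalize (π i ψ))))
  have h₁ (i : ι) (j : κ) : ‖a i j‖ ≤ c := by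
    have hT := (σ j ∘L adjoint (π i)).le_of_opNorm_le (hσπ i j) (NormedSpace.normalize (π i ψ))
    calc ‖a i j‖ ≤ 1 * (c * 1) := (norm_inner_le_norm _ _).trans <|
          mul_le_mul (norm_normalize_le_one _) (hT.trans (by gcongr; exact norm_normalize_le_one _))
            (norm_nonneg _) zero_le_one
      _ = c := by ring
  have h₂ := hπ.norm_sum_sum_mul_inner_adjoint_le hσ (fun i => norm_normalize_le_one (π i ψ))
    (fun j => norm_normalize_le_one (σ j ψ))
  have hθ1' : 0 < 1 - θ := by linarith
  have hexp : (1 + θ) / (1 - θ) + 1 = 2 / (1 - θ) := by field_simp; ring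
  -- `y` is the Hölder-dual of `(‖σ j ψ‖)_j`: pairing it with `(σ j ψ)_j` gives `‖σ ψ‖_{p'} ^ p'`.
  set y : κ → ℝ := fun j => ‖σ j ψ‖ ^ ((1 + θ) / (1 - θ))
  have hy (j : κ) : y j ^ (2 / (1 + θ)) = ‖σ j ψ‖ ^ (2 / (1 - θ)) := by
    rw [← Real.rpow_mul (norm_nonneg _)]
    congr 1
    field_simp
  have hsum : ∑ i, ∑ j, (‖π i ψ‖ : ℂ) * y j * a i j =
      ((∑ j, ‖σ j ψ‖ ^ (2 / (1 - θ)) : ℝ) : ℂ) := by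
    simp only [a, sum_sum_mul_inner_adjoint_eq, Complex.conj_ofReal, ofReal_norm_smul_normalize,
      hπ.sum_adjoint_apply, sum_inner, adjoint_inner_left, inner_smul_left, inner_normalize_self]
    push_cast
    refine Finset.sum_congr rfl fun j _ => ?_
    rw [← Complex.ofReal_mul, ← hexp, Real.rpow_add_one' (norm_nonneg _)
      (hexp ▸ div_ne_zero two_ne_zero hθ1'.ne')]
  have := norm_sum_sum_mul_le_of_interpolation (a := a) hc hθ0 hθ1.le h₂ h₁
    (fun i => norm_nonneg (π i ψ)) (fun j => by positivity : ∀ j, 0 ≤ y j)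
  rw [hsum, Complex.norm_real, Real.norm_of_nonneg (by positivity)] at this
  simp only [hy] at this
  exact rpow_le_of_le_mul_rpow (by positivity) (by positivity) hθ1 this

end IsPartitionOfIdentity

end Hilbert

section Renyi

variable {ι κ : Type*} [Fintype ι] [Fintype κ]

noncomputable def renyiEntropy (α : ℝ) (p : ι → ℝ) : ℝ :=
  Real.log (∑ i, p i ^ α) / (1 - α)

lemma hasDerivAt_const_rpow_one_of_nonneg {p : ℝ} (hp : 0 ≤ p) :
    HasDerivAt (fun α : ℝ => p ^ α) (p * Real.log p) 1 := by
  rcases hp.eq_or_lt with rfl | hp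
  · have : (fun α : ℝ => (0 : ℝ) ^ α) =ᶠ[𝓝 1] fun _ => 0 := by
      filter_upwards [eventually_ne_nhds one_ne_zero] with α hα
      exact Real.zero_rpow hα
    simpa using (hasDerivAt_const (1 : ℝ) (0 : ℝ)).congr_of_eventuallyEq this
  · simpa using (Real.hasStrictDerivAt_const_rpow hp 1).hasDerivAt

theorem tendsto_renyiEntropy_nhdsNE_one {p : ι → ℝ} (hp : ∀ i, 0 ≤ p i) (hp1 : ∑ i, p i = 1) :
    Tendsto (fun α => renyiEntropy α p) (𝓝[≠] 1) (𝓝 (∑ i, eta (p i))) := by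
  have hsum : HasDerivAt (fun α : ℝ => ∑ i, p i ^ α) (∑ i, p i * Real.log (p i)) 1 :=
    HasDerivAt.fun_sum fun i _ => hasDerivAt_const_rpow_one_of_nonneg (hp i)
  have hlog := hsum.log (by simp [hp1])
  simp only [Real.rpow_one, hp1, div_one] at hlog
  convert (hasDerivAt_iff_tendsto_slope.mp hlog).neg using 2 with α
  · simp [renyiEntropy, slope_def_field, hp1, ← div_neg]
  · simp [eta]

lemma sum_rpow_pos {p : ι → ℝ} (hp : ∀ i, 0 ≤ p i) (hp1 : ∑ i, p i = 1) (α : ℝ) :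
    0 < ∑ i, p i ^ α := by
  obtain ⟨i, -, hi⟩ := Finset.exists_ne_zero_of_sum_ne_zero (hp1.trans_ne one_ne_zero)
  exact (Real.rpow_pos_of_pos ((hp i).lt_of_ne' hi) α).trans_le
    (Finset.single_le_sum (fun j _ => Real.rpow_nonneg (hp j) α) (Finset.mem_univ i))

theorem neg_two_mul_log_le_renyiEntropy_add {p : ι → ℝ} {q : κ → ℝ} {c θ : ℝ}
    (hp : ∀ i, 0 ≤ p i) (hq : ∀ j, 0 ≤ q j) (hp1 : ∑ i, p i = 1) (hq1 : ∑ j, q j = 1)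
    (hc : 0 ≤ c) (hθ0 : 0 < θ) (hθ1 : θ < 1)
    (h : (∑ j, q j ^ (1 / (1 - θ))) ^ ((1 - θ) / 2) ≤
      c ^ θ * (∑ i, p i ^ (1 / (1 + θ))) ^ ((1 + θ) / 2)) :
    -2 * Real.log c ≤ renyiEntropy (1 / (1 + θ)) p + renyiEntropy (1 / (1 - θ)) q := by
  have hP := sum_rpow_pos hp hp1 (1 / (1 + θ))
  have hQ := sum_rpow_pos hq hq1 (1 / (1 - θ))
  have hc : 0 < c := by
    refine hc.lt_of_ne' fun hc0 => ?_
    rw [hc0, Real.zero_rpow hθ0.ne', zero_mul] at h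
    exact h.not_gt (by positivity)
  have hlog := Real.log_le_log (by positivity) h
  rw [Real.log_mul (by positivity) (by positivity), Real.log_rpow hQ, Real.log_rpow hc,
    Real.log_rpow hP] at hlog
  have hθ1' : 0 < 1 - θ := by linarith
  have hα : 1 - 1 / (1 + θ) = θ / (1 + θ) := by field_simp; ring
  have hβ : 1 - 1 / (1 - θ) = -θ / (1 - θ) := by field_simp; ring
  rw [renyiEntropy, renyiEntropy, hα, hβ, div_div_eq_mul_div, div_div_eq_mul_div, div_neg,
    ← sub_eq_add_neg, ← sub_div, le_div_iff₀ hθ0]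
  linarith

end Renyi

lemma tendsto_one_div_one_add_mul_nhdsGT {e : ℝ} (he : e ≠ 0) :
    Tendsto (fun θ : ℝ => 1 / (1 + e * θ)) (𝓝[>] 0) (𝓝[≠] 1) := by
  refine tendsto_nhdsWithin_of_tendsto_nhds_of_eventually_within _ ?_ ?_
  · have : ContinuousAt (fun θ : ℝ => 1 / (1 + e * θ)) 0 := by fun_prop (disch := norm_num)
    simpa using this.tendsto.mono_left nhdsWithin_le_nhds
  · filter_upwards [self_mem_nhdsWithin] with θ hθ
    simp [he, (show 0 < θ from hθ).ne']

lemma sq_rpow_one_div {x : ℝ} (hx : 0 ≤ x) (a : ℝ) : (x ^ 2) ^ (1 / a) = x ^ (2 / a) := by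
  rw [← Real.rpow_natCast_mul hx, Nat.cast_ofNat, mul_one_div]

theorem maassen_uffink_entropic_uncertainty_general
    {H H' : Type*}
    [NormedAddCommGroup H] [InnerProductSpace ℂ H] [CompleteSpace H]
    [NormedAddCommGroup H'] [InnerProductSpace ℂ H'] [CompleteSpace H']
    {D : ℕ} (π : Fin D → (H' →L[ℂ] H))
    (hπ : ∑ i, (ContinuousLinearMap.adjoint (π i)).comp (π i)
        = ContinuousLinearMap.id ℂ H')
    (U : H' →L[ℂ] H')
    (hU₁ : (ContinuousLinearMap.adjoint U).comp U = ContinuousLinearMap.id ℂ H')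
    (ψ : H') (hψ : ‖ψ‖ = 1) :
    (∑ i, eta (‖π i ψ‖ ^ 2)) + (∑ i, eta (‖π i (U ψ)‖ ^ 2))
      ≥ -2 * Real.log (⨆ i : Fin D, ⨆ j : Fin D,
          ‖(π i).comp (U.comp (ContinuousLinearMap.adjoint (π j)))‖) := by
  set c := ⨆ i : Fin D, ⨆ j : Fin D, ‖(π i).comp (U.comp (adjoint (π j)))‖
  have hπ' : IsPartitionOfIdentity π := hπ
  have hσ : IsPartitionOfIdentity fun j => π j ∘L U := hπ'.comp_right hU₁
  have hc0 : 0 ≤ c := Real.iSup_nonneg fun i => Real.iSup_nonneg fun j => norm_nonneg _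
  have hc (i j : Fin D) : ‖(π j ∘L U) ∘L adjoint (π i)‖ ≤ c := by
    rw [comp_assoc]
    exact le_ciSup_of_le (Set.finite_range _).bddAbove j
      (le_ciSup (f := fun b => ‖π j ∘L U ∘L adjoint (π b)‖) (Set.finite_range _).bddAbove i)
  have hp : ∑ i, ‖π i ψ‖ ^ 2 = 1 := by rw [hπ'.sum_norm_sq, hψ, one_pow]
  have hq : ∑ j, ‖π j (U ψ)‖ ^ 2 = 1 := (hσ.sum_norm_sq ψ).trans (by rw [hψ, one_pow])
  have hrenyi : ∀ᶠ θ in 𝓝[>] 0, -2 * Real.log c ≤ renyiEntropy (1 / (1 + θ)) (‖π · ψ‖ ^ 2) +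
      renyiEntropy (1 / (1 - θ)) (‖π · (U ψ)‖ ^ 2) := by
    filter_upwards [Ioo_mem_nhdsGT one_pos] with θ hθ
    refine neg_two_mul_log_le_renyiEntropy_add (fun _ => sq_nonneg _) (fun _ => sq_nonneg _)
      hp hq hc0 hθ.1 hθ.2 ?_
    simpa only [sq_rpow_one_div (norm_nonneg _), comp_apply] using
      hπ'.hausdorff_young hσ hc0 hθ.1.le hθ.2 hc ψ
  have hα : Tendsto (fun θ : ℝ => 1 / (1 + θ)) (𝓝[>] 0) (𝓝[≠] 1) := by
    simpa using tendsto_one_div_one_add_mul_nhdsGT one_ne_zero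
  have hβ : Tendsto (fun θ : ℝ => 1 / (1 - θ)) (𝓝[>] 0) (𝓝[≠] 1) := by
    simpa [← sub_eq_add_neg] using tendsto_one_div_one_add_mul_nhdsGT (neg_ne_zero.mpr one_ne_zero)
  exact ge_of_tendsto
    (((tendsto_renyiEntropy_nhdsNE_one (fun _ => sq_nonneg _) hp).comp hα).add
      ((tendsto_renyiEntropy_nhdsNE_one (fun _ => sq_nonneg _) hq).comp hβ)) hrenyi

/-- **Entropic uncertainty principle (Maassen–Uffink).**
If `(π i)_{i : Fin D}` is a family of bounded operators from `H'` to `H` with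
`∑ i, (π i)† ∘ (π i) = 1` and `U` is a unitary operator on `H'`, then for every unit
vector `ψ` one has
`∑ i, η(‖π i ψ‖²) + ∑ i, η(‖π i (U ψ)‖²) ≥ -2 log (max_{i,j} ‖π i ∘ U ∘ (π j)†‖)`. -/
theorem maassen_uffink_entropic_uncertainty
    {H H' : Type*}
    [NormedAddCommGroup H] [InnerProductSpace ℂ H] [CompleteSpace H]
    [NormedAddCommGroup H'] [InnerProductSpace ℂ H'] [CompleteSpace H']
    {D : ℕ} (π : Fin D → (H' →L[ℂ] H))
    (hπ : ∑ i, (ContinuousLinearMap.adjoint (π i)).comp (π i)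
        = ContinuousLinearMap.id ℂ H')
    (U : H' →L[ℂ] H')
    (hU₁ : (ContinuousLinearMap.adjoint U).comp U = ContinuousLinearMap.id ℂ H')
    (hU₂ : U.comp (ContinuousLinearMap.adjoint U) = ContinuousLinearMap.id ℂ H')
    (ψ : H') (hψ : ‖ψ‖ = 1) :
    (∑ i, eta (‖π i ψ‖ ^ 2)) + (∑ i, eta (‖π i (U ψ)‖ ^ 2))
      ≥ -2 * Real.log (⨆ i : Fin D, ⨆ j : Fin D,
          ‖(π i).comp (U.comp (ContinuousLinearMap.adjoint (π j)))‖) :=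
  maassen_uffink_entropic_uncertainty_general π hπ U hU₁ ψ hψ
end

section
/- Convolution-kernel identity for the adapted quantization (Appendix A of the paper): Let ℏ > 0, let B ∈ GL(2d,R), and set G_B := 2^{d/2} |det B|^{1/2} G∘B. Then for every bounded continuous function a : R^{2d} → C and every ρ ∈ R^{2d}, (a ⋆ (G_B ♯ G_B))(ρ) = ∫_{R^{2d}} a(ρ + B^{−1}ρ₀) K(ρ₀) dρ₀, where K(ρ₀) := 2^d ∫_{R^{2d}} e^{−2iπ⟨ρ₁,ρ₀⟩} G(ρ₁) G(πℏ · B J Bᵀ ρ₁ − ρ₀) dρ₁, and ⋆ denotes convolution on R^{2d}: (a ⋆ F)(ρ) = ∫ a(ρ₀) F(ρ − ρ₀) dρ₀. -/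
open MeasureTheory Matrix

noncomputable section

/-- The standard symplectic matrix `J = (0, -I; I, 0)` on `ℝ^{2d}`. -/
def Jmat (d : ℕ) : Matrix (Fin d ⊕ Fin d) (Fin d ⊕ Fin d) ℝ :=
  Matrix.fromBlocks 0 (-1) 1 0

/-- Euclidean inner product on `ℝ^{2d}`. -/
def ip {d : ℕ} (v w : (Fin d ⊕ Fin d) → ℝ) : ℝ := ∑ i, v i * w i

/-- The Gaussian `G(w) = exp(-π ‖w‖²)` on `ℝ^{2d}`. -/
def Gfun {d : ℕ} (w : (Fin d ⊕ Fin d) → ℝ) : ℝ := Real.exp (-(Real.pi * ∑ i, (w i) ^ 2))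

/-- The Moyal product
`(F₁ ♯ F₂)(w) = (πℏ)^{-2d} ∬ F₁(w+w₁) F₂(w+w₂) e^{-(2i/ℏ)⟨w₁, Jw₂⟩} dw₁ dw₂`. -/
def moyal (d : ℕ) (ℏ : ℝ) (F₁ F₂ : ((Fin d ⊕ Fin d) → ℝ) → ℂ)
    (w : (Fin d ⊕ Fin d) → ℝ) : ℂ :=
  (((Real.pi * ℏ) ^ (2 * d))⁻¹ : ℝ) *
    ∫ w₁ : (Fin d ⊕ Fin d) → ℝ, ∫ w₂ : (Fin d ⊕ Fin d) → ℝ,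
      F₁ (w + w₁) * F₂ (w + w₂) *
        Complex.exp (-(2 * Complex.I / ℏ) * (ip w₁ ((Jmat d).mulVec w₂) : ℝ))

/-- The rescaled Gaussian `G_B := 2^{d/2} |det B|^{1/2} G ∘ B`. -/
def GB {d : ℕ} (B : Matrix (Fin d ⊕ Fin d) (Fin d ⊕ Fin d) ℝ)
    (w : (Fin d ⊕ Fin d) → ℝ) : ℝ :=
  (2 : ℝ) ^ ((d : ℝ) / 2) * Real.sqrt |B.det| * Gfun (B.mulVec w)

/-- The kernel `K(ρ₀) = 2^d ∫ e^{-2iπ⟨ρ₁,ρ₀⟩} G(ρ₁) G(πℏ BJBᵀ ρ₁ − ρ₀) dρ₁`. -/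
def Kker (d : ℕ) (ℏ : ℝ) (B : Matrix (Fin d ⊕ Fin d) (Fin d ⊕ Fin d) ℝ)
    (ρ₀ : (Fin d ⊕ Fin d) → ℝ) : ℂ :=
  (2 : ℝ) ^ d *
    ∫ ρ₁ : (Fin d ⊕ Fin d) → ℝ,
      Complex.exp (-(2 * Real.pi * Complex.I) * (ip ρ₁ ρ₀ : ℝ)) *
        (Gfun ρ₁ : ℝ) *
        ((Gfun ((Real.pi * ℏ) • ((B * Jmat d * Bᵀ).mulVec ρ₁) - ρ₀) : ℝ) : ℂ)

/-!
Substituting `ρ₀ ↦ ρ + B⁻¹ρ₀` in the convolution reduces the identity to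
`(G_B ♯ G_B)(w) = |det B| K(-Bw)`. In the Moyal integral put `w₁ = πℏ J Bᵀ ρ₁`: since `JᵀJ = 1`,
the symplectic phase `e^{-(2i/ℏ)⟨w₁, J w₂⟩}` becomes the Fourier phase `e^{-2πi⟨ρ₁, B w₂⟩}`, and
the `w₂`-integral is the Fourier transform of a translated Gaussian, computed from the
self-duality `∫ G(u) e^{-2πi⟨ξ,u⟩} du = G(ξ)`. With the prefactor `(πℏ)^{-2d}`, the Jacobians
`(πℏ)^{2d} |det B|` and `|det B|⁻¹` and the square `2^d |det B|` of the normalisation of `G_B`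
combine to the constant `2^d |det B|`.
-/

section ChangeOfVariables

variable {ι E : Type*} [Fintype ι] [DecidableEq ι] [NormedAddCommGroup E] [NormedSpace ℝ E]

theorem integral_comp_add_mulVec (M : Matrix ι ι ℝ) (hM : M.det ≠ 0) (b : ι → ℝ)
    (f : (ι → ℝ) → E) : ∫ x, f (b + M *ᵥ x) = |M.det|⁻¹ • ∫ x, f x := by
  let e : (ι → ℝ) ≃ᵐ (ι → ℝ) :=
    (M.toLinearEquiv' (M.invertibleOfIsUnitDet hM.isUnit)).toContinuousLinearEquiv
      |>.toHomeomorph.toMeasurableEquiv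
  have he : ⇑e = Matrix.toLin' M := rfl
  calc ∫ x, f (b + M *ᵥ x) = ∫ y, f (b + y) ∂(volume.map e) := by
        rw [integral_map_equiv, he]; rfl
    _ = |M.det|⁻¹ • ∫ x, f x := by
        rw [he, Real.map_matrix_volume_pi_eq_smul_volume_pi hM, integral_smul_measure,
          integral_add_left_eq_self (fun y => f y), ENNReal.toReal_ofReal (by positivity), abs_inv]

theorem abs_det_inv (M : Matrix ι ι ℝ) : |M⁻¹.det| = |M.det|⁻¹ := by
  rw [det_nonsing_inv, Ring.inverse_eq_inv', abs_inv]

end ChangeOfVariables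

section GaussianMoyalProduct

open Real Complex

theorem integral_Gfun_mul_cexp_ip {d : ℕ} (ξ : Fin d ⊕ Fin d → ℝ) :
    ∫ u, (Gfun u : ℂ) * cexp (-(2 * π * I) * (ip ξ u : ℝ)) = Gfun ξ := by
  have hintegrand : ∀ u : Fin d ⊕ Fin d → ℝ, (Gfun u : ℂ) * cexp (-(2 * π * I) * (ip ξ u : ℝ))
      = cexp (-π * ∑ i, (u i : ℂ) ^ 2 + ∑ i, -(2 * π * I * ξ i) * u i) := by
    intro u
    simp only [Gfun, ip, ofReal_exp, ← Complex.exp_add]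
    push_cast
    simp only [Finset.mul_sum, ← Finset.sum_neg_distrib, ← Finset.sum_add_distrib]
    exact congrArg cexp (Finset.sum_congr rfl fun i _ => by ring)
  have hπ : (π : ℂ) ≠ 0 := ofReal_ne_zero.2 pi_ne_zero
  simp_rw [hintegrand]
  rw [GaussianFourier.integral_cexp_neg_mul_sum_add (by simpa using pi_pos), div_self hπ,
    one_cpow, one_mul, Gfun, ofReal_exp]
  push_cast
  simp only [Finset.mul_sum, ← Finset.sum_neg_distrib, Finset.sum_div, neg_sq, mul_pow, I_sq]
  congr 1
  refine Finset.sum_congr rfl fun i _ => ?_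
  field_simp
  ring

theorem ip_eq_dotProduct {d : ℕ} (v w : Fin d ⊕ Fin d → ℝ) : ip v w = v ⬝ᵥ w := rfl

theorem Jmat_transpose_mul_self (d : ℕ) : (Jmat d)ᵀ * Jmat d = 1 := by
  simp [Jmat, Matrix.fromBlocks_transpose, Matrix.fromBlocks_multiply, ← Matrix.fromBlocks_one]

theorem abs_det_Jmat (d : ℕ) : |(Jmat d).det| = 1 := by
  have h := congrArg Matrix.det (Jmat_transpose_mul_self d)
  rw [Matrix.det_mul, Matrix.det_transpose, Matrix.det_one, ← abs_mul_self, abs_mul] at h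
  exact (mul_self_eq_one_iff.1 h).resolve_right (by linarith [abs_nonneg (Jmat d).det])

theorem abs_det_smul_Jmat_mul_transpose {d : ℕ} (c : ℝ)
    (B : Matrix (Fin d ⊕ Fin d) (Fin d ⊕ Fin d) ℝ) :
    |(c • (Jmat d * Bᵀ)).det| = c ^ (2 * d) * |B.det| := by
  rw [det_smul, det_mul, det_transpose, abs_mul, abs_mul, abs_det_Jmat, one_mul,
    Fintype.card_sum, Fintype.card_fin, ← two_mul, abs_pow, (even_two_mul d).pow_abs]

theorem ip_Jmat_mul_transpose_mulVec_Jmat_mulVec {d : ℕ}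
    (B : Matrix (Fin d ⊕ Fin d) (Fin d ⊕ Fin d) ℝ) (v w : Fin d ⊕ Fin d → ℝ) :
    ip ((Jmat d * Bᵀ) *ᵥ v) (Jmat d *ᵥ w) = ip v (B *ᵥ w) := by
  rw [ip_eq_dotProduct, ip_eq_dotProduct, ← mulVec_mulVec, dotProduct_mulVec, ← vecMul_transpose,
    vecMul_vecMul, Jmat_transpose_mul_self, vecMul_one, dotProduct_comm,
    dotProduct_transpose_mulVec]

def gbCoeff {d : ℕ} (B : Matrix (Fin d ⊕ Fin d) (Fin d ⊕ Fin d) ℝ) : ℝ :=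
  (2 : ℝ) ^ ((d : ℝ) / 2) * √|B.det|

theorem GB_eq_gbCoeff_mul {d : ℕ} (B : Matrix (Fin d ⊕ Fin d) (Fin d ⊕ Fin d) ℝ)
    (w : Fin d ⊕ Fin d → ℝ) :
    GB B w = gbCoeff B * Gfun (B *ᵥ w) := rfl

theorem gbCoeff_sq {d : ℕ} (B : Matrix (Fin d ⊕ Fin d) (Fin d ⊕ Fin d) ℝ) :
    gbCoeff B ^ 2 = 2 ^ d * |B.det| := by
  rw [gbCoeff, mul_pow, ← Real.rpow_natCast, ← Real.rpow_mul zero_le_two,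
    Real.sq_sqrt (abs_nonneg _)]
  norm_num

theorem integral_GB_add_mul_cexp_ip {d : ℕ} (B : Matrix (Fin d ⊕ Fin d) (Fin d ⊕ Fin d) ℝ)
    (hB : IsUnit B.det) (w ξ : Fin d ⊕ Fin d → ℝ) :
    ∫ w₂, (GB B (w + w₂) : ℂ) * cexp (-(2 * π * I) * (ip ξ (B *ᵥ w₂) : ℝ))
      = (gbCoeff B * |B.det|⁻¹ : ℝ) * cexp (2 * π * I * (ip ξ (B *ᵥ w) : ℝ)) * Gfun ξ := by
  have hBinv : B⁻¹.det ≠ 0 := (isUnit_nonsing_inv_det B hB).ne_zero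
  set F := fun w₂ => (GB B (w + w₂) : ℂ) * cexp (-(2 * π * I) * (ip ξ (B *ᵥ w₂) : ℝ))
  have hF : ∀ u, F (-w + B⁻¹ *ᵥ u) = (gbCoeff B : ℂ) * cexp (2 * π * I * (ip ξ (B *ᵥ w) : ℝ)) *
      ((Gfun u : ℂ) * cexp (-(2 * π * I) * (ip ξ u : ℝ))) := by
    intro u
    have hBB : B *ᵥ (B⁻¹ *ᵥ u) = u := by rw [mulVec_mulVec, mul_nonsing_inv B hB, one_mulVec]
    simp only [F, GB_eq_gbCoeff_mul, add_neg_cancel_left, mulVec_add, mulVec_neg, hBB,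
      ip_eq_dotProduct, dotProduct_add, dotProduct_neg]
    push_cast
    rw [mul_add, Complex.exp_add]
    ring_nf
  calc ∫ w₂, F w₂ = |B⁻¹.det| • ∫ u, F (-w + B⁻¹ *ᵥ u) := by
        rw [integral_comp_add_mulVec B⁻¹ hBinv (-w) F, smul_smul,
          mul_inv_cancel₀ (abs_ne_zero.2 hBinv), one_smul]
    _ = _ := by
        simp_rw [hF]
        rw [integral_const_mul, integral_Gfun_mul_cexp_ip, abs_det_inv, Complex.real_smul]
        push_cast
        ring

theorem integral_GB_mul_GB_mul_cexp_ip_Jmat {d : ℕ} {ℏ : ℝ} (hℏ : ℏ ≠ 0)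
    (B : Matrix (Fin d ⊕ Fin d) (Fin d ⊕ Fin d) ℝ) (hB : IsUnit B.det)
    (w ρ₁ : Fin d ⊕ Fin d → ℝ) :
    ∫ w₂, (GB B (w + ((π * ℏ) • (Jmat d * Bᵀ)) *ᵥ ρ₁) : ℂ) * GB B (w + w₂) *
        cexp (-(2 * I / ℏ) * (ip (((π * ℏ) • (Jmat d * Bᵀ)) *ᵥ ρ₁) (Jmat d *ᵥ w₂) : ℝ))
      = ((2 : ℝ) ^ d : ℝ) * (cexp (-(2 * π * I) * (ip ρ₁ (-(B *ᵥ w)) : ℝ)) * (Gfun ρ₁ : ℝ) *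
        ((Gfun ((π * ℏ) • ((B * Jmat d * Bᵀ) *ᵥ ρ₁) - -(B *ᵥ w)) : ℝ) : ℂ)) := by
  have hℏ' : (ℏ : ℂ) ≠ 0 := ofReal_ne_zero.2 hℏ
  have hphase : ∀ w₂, -(2 * I / ℏ) * (ip (((π * ℏ) • (Jmat d * Bᵀ)) *ᵥ ρ₁) (Jmat d *ᵥ w₂) : ℂ)
      = -(2 * π * I) * (ip ρ₁ (B *ᵥ w₂) : ℂ) := by
    intro w₂
    rw [smul_mulVec, ip_eq_dotProduct, smul_dotProduct, ← ip_eq_dotProduct,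
      ip_Jmat_mul_transpose_mulVec_Jmat_mulVec, smul_eq_mul]
    push_cast
    field_simp
  have hGB : GB B (w + ((π * ℏ) • (Jmat d * Bᵀ)) *ᵥ ρ₁)
      = gbCoeff B * Gfun ((π * ℏ) • ((B * Jmat d * Bᵀ) *ᵥ ρ₁) - -(B *ᵥ w)) := by
    rw [GB_eq_gbCoeff_mul, mulVec_add, smul_mulVec, mulVec_smul, mulVec_mulVec, ← Matrix.mul_assoc,
      sub_neg_eq_add, add_comm]
  have hcoeff : gbCoeff B * (gbCoeff B * |B.det|⁻¹) = 2 ^ d := by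
    rw [← mul_assoc, ← sq, gbCoeff_sq, mul_inv_cancel_right₀ (abs_ne_zero.2 hB.ne_zero)]
  calc _ = (GB B (w + ((π * ℏ) • (Jmat d * Bᵀ)) *ᵥ ρ₁) : ℂ) *
        ∫ w₂, (GB B (w + w₂) : ℂ) * cexp (-(2 * π * I) * (ip ρ₁ (B *ᵥ w₂) : ℝ)) := by
        rw [← integral_const_mul]
        congr 1
        funext w₂
        rw [hphase, mul_assoc]
    _ = _ := by
        rw [integral_GB_add_mul_cexp_ip B hB, hGB, ← hcoeff, ip_eq_dotProduct, ip_eq_dotProduct,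
          dotProduct_neg]
        push_cast
        ring_nf

theorem moyal_GB_GB {d : ℕ} {ℏ : ℝ} (hℏ : ℏ ≠ 0) (B : Matrix (Fin d ⊕ Fin d) (Fin d ⊕ Fin d) ℝ)
    (hB : IsUnit B.det) (w : Fin d ⊕ Fin d → ℝ) :
    moyal d ℏ (fun w => (GB B w : ℂ)) (fun w => (GB B w : ℂ)) w
      = |B.det| * Kker d ℏ B (-(B *ᵥ w)) := by
  have hπℏ : (π * ℏ) ^ (2 * d) ≠ 0 := pow_ne_zero _ (mul_ne_zero pi_ne_zero hℏ)
  have hπℏ' : ((π : ℂ) * ℏ) ^ (2 * d) ≠ 0 := by exact_mod_cast hπℏ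
  have hA : |((π * ℏ) • (Jmat d * Bᵀ)).det| ≠ 0 := by
    rw [abs_det_smul_Jmat_mul_transpose]; exact mul_ne_zero hπℏ (abs_ne_zero.2 hB.ne_zero)
  have hsubst := integral_comp_add_mulVec _ (abs_ne_zero.1 hA) 0 fun w₁ => ∫ w₂,
    (GB B (w + w₁) : ℂ) * GB B (w + w₂) * cexp (-(2 * I / ℏ) * (ip w₁ (Jmat d *ᵥ w₂) : ℝ))
  rw [eq_comm, ← eq_inv_smul_iff₀ (inv_ne_zero hA), inv_inv] at hsubst
  simp only [zero_add, integral_GB_mul_GB_mul_cexp_ip_Jmat hℏ B hB, integral_const_mul] at hsubst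
  rw [moyal, hsubst, Kker, abs_det_smul_Jmat_mul_transpose, Complex.real_smul]
  push_cast
  field_simp

end GaussianMoyalProduct

theorem adapted_quantization_convolution_kernel_general
    (d : ℕ) (ℏ : ℝ) (hℏ : 0 < ℏ)
    (B : Matrix (Fin d ⊕ Fin d) (Fin d ⊕ Fin d) ℝ) (hB : IsUnit B.det)
    (a : ((Fin d ⊕ Fin d) → ℝ) → ℂ) (ρ : (Fin d ⊕ Fin d) → ℝ) :
    (∫ ρ₀ : (Fin d ⊕ Fin d) → ℝ,
        a ρ₀ * moyal d ℏ (fun w => (GB B w : ℂ)) (fun w => (GB B w : ℂ)) (ρ - ρ₀))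
      = ∫ ρ₀ : (Fin d ⊕ Fin d) → ℝ, a (ρ + B⁻¹.mulVec ρ₀) * Kker d ℏ B ρ₀ := by
  have hdet : |B.det| ≠ 0 := abs_ne_zero.2 hB.ne_zero
  have hdet' : ((|B.det| : ℝ) : ℂ) ≠ 0 := Complex.ofReal_ne_zero.2 hdet
  have hsubst := integral_comp_add_mulVec B⁻¹ (isUnit_nonsing_inv_det B hB).ne_zero ρ
    fun ρ₀ => a ρ₀ * moyal d ℏ (fun w => (GB B w : ℂ)) (fun w => (GB B w : ℂ)) (ρ - ρ₀)
  rw [abs_det_inv, inv_inv, eq_comm, ← eq_inv_smul_iff₀ hdet] at hsubst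
  rw [hsubst, ← integral_smul]
  congr 1
  funext ρ₀
  rw [sub_add_cancel_left, moyal_GB_GB hℏ.ne' B hB, mulVec_neg, neg_neg, mulVec_mulVec,
    mul_nonsing_inv B hB, one_mulVec, Complex.real_smul, Complex.ofReal_inv]
  field_simp

/-- **Convolution-kernel identity for the adapted quantization.**
For every bounded continuous `a : ℝ^{2d} → ℂ`,
`(a ⋆ (G_B ♯ G_B))(ρ) = ∫ a(ρ + B⁻¹ρ₀) K(ρ₀) dρ₀`. -/
theorem adapted_quantization_convolution_kernel
    (d : ℕ) (ℏ : ℝ) (hℏ : 0 < ℏ)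
    (B : Matrix (Fin d ⊕ Fin d) (Fin d ⊕ Fin d) ℝ) (hB : IsUnit B.det)
    (a : ((Fin d ⊕ Fin d) → ℝ) → ℂ) (ha : Continuous a)
    (hbd : ∃ C : ℝ, ∀ x, ‖a x‖ ≤ C) (ρ : (Fin d ⊕ Fin d) → ℝ) :
    (∫ ρ₀ : (Fin d ⊕ Fin d) → ℝ,
        a ρ₀ * moyal d ℏ (fun w => (GB B w : ℂ)) (fun w => (GB B w : ℂ)) (ρ - ρ₀))
      = ∫ ρ₀ : (Fin d ⊕ Fin d) → ℝ, a (ρ + B⁻¹.mulVec ρ₀) * Kker d ℏ B ρ₀ :=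
  adapted_quantization_convolution_kernel_general d ℏ hℏ B hB a ρ

end
end

section
/- Iterated subadditivity of translated entropies (Appendix C, corollary): Let μ be a Borel probability measure on T^{2d}, A an automorphism of T^{2d} induced by a matrix in GL(2d,Z), and P₁,…,P_K : T^{2d} → [0,1] continuous with Σ_{i=1}^K P_i² ≡ 1. Then for all integers m₀ ≥ 1, q ≥ 1 and 0 ≤ r < m₀, setting m := q·m₀ + r, one has h_{2m}(μ) ≤ h_{2r}^{−q m₀}(μ) + Σ_{j=1}^{q} h_{2m₀}^{−(q+1−2j)m₀ + r}(μ). -/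
open MeasureTheory

noncomputable section

/-- The `2d`-torus `ℝ^{2d}/ℤ^{2d}`. -/
abbrev Torus (d : ℕ) := Fin (2 * d) → AddCircle (1 : ℝ)

/-- The map on the torus induced by an integer matrix. -/
def tmap {d : ℕ} (M : Matrix (Fin (2 * d)) (Fin (2 * d)) ℤ) (x : Torus d) : Torus d :=
  fun i => ∑ j, M i j • x j

/-- `η(x) = -x log x` (with `η(0) = 0`). -/
def etaF (x : ℝ) : ℝ := -(x * Real.log x)

/-- The translated entropy `h_{2m}^p(μ)` of a smooth partition `P` with respect to the
toral automorphism induced by `A ∈ GL(2d,ℤ)`: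
`h_{2m}^p(μ) = ∑_α η(∫ ∏_{j=-m}^{m-1} P_{α_j}² ∘ A^{j+p} dμ)`. -/
def transEnt {d K : ℕ} (μ : Measure (Torus d))
    (A : (Matrix (Fin (2 * d)) (Fin (2 * d)) ℤ)ˣ)
    (P : Fin K → Torus d → ℝ) (m : ℕ) (p : ℤ) : ℝ :=
  ∑ α : Fin (2 * m) → Fin K,
    etaF (∫ x, ∏ j : Fin (2 * m),
      (P (α j) (tmap ((A ^ ((j : ℤ) - (m : ℤ) + p) : (Matrix (Fin (2 * d)) (Fin (2 * d)) ℤ)ˣ) : Matrix (Fin (2 * d)) (Fin (2 * d)) ℤ) x)) ^ 2 ∂μ)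


/-! The entropy of a join of two partitions of unity is at most the sum of their entropies
(the analogue of `H(X, Y) ≤ H(X) + H(Y)`). The word partition defining `h_{2m}` is the join of
the `2m` partitions `P_i² ∘ A^k`, so splitting the window `[-m, m)` into a block of length `2r`
followed by `q` blocks of length `2m₀` bounds `h_{2m}` by the entropies of the blocks, which are
translated entropies. -/

open Finset

theorem sub_mul_le_mul_log_sub {p x y : ℝ} (hp : 0 ≤ p) (hpx : p ≤ x) (hpy : p ≤ y) :
    p - x * y ≤ p * Real.log p - p * Real.log x - p * Real.log y := by
  rcases hp.eq_or_lt with rfl | hp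
  · simp only [zero_sub, Real.log_zero, mul_zero, zero_mul, sub_zero, neg_nonpos]
    exact mul_nonneg hpx hpy
  · have hx : 0 < x := hp.trans_le hpx
    have hy : 0 < y := hp.trans_le hpy
    have hlog : Real.log (x * y / p) = Real.log x + Real.log y - Real.log p := by
      rw [Real.log_div (by positivity) hp.ne', Real.log_mul hx.ne' hy.ne']
    have h := mul_le_mul_of_nonneg_left (Real.log_le_sub_one_of_pos (by positivity : 0 < x * y / p))
      hp.le
    have hcancel : p * (x * y / p - 1) = x * y - p := by field_simp
    rw [hlog, hcancel] at h
    linarith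

theorem sum_sum_etaF_le {σ τ : Type*} [Fintype σ] [Fintype τ] (w : σ → τ → ℝ)
    (hw : ∀ a b, 0 ≤ w a b) (hsum : ∑ a, ∑ b, w a b = 1) :
    ∑ a, ∑ b, etaF (w a b) ≤ ∑ a, etaF (∑ b, w a b) + ∑ b, etaF (∑ a, w a b) := by
  have hmarginals : ∑ a, ∑ b, (∑ b', w a b') * (∑ a', w a' b) = 1 := by
    rw [← sum_mul_sum, hsum, sum_comm, hsum, one_mul]
  have hrow : ∑ a, etaF (∑ b, w a b) = -∑ a, ∑ b, w a b * Real.log (∑ b', w a b') := by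
    simp only [etaF, sum_mul, sum_neg_distrib]
  have hcol : ∑ b, etaF (∑ a, w a b) = -∑ a, ∑ b, w a b * Real.log (∑ a', w a' b) := by
    rw [sum_comm (f := fun a b => w a b * _)]
    simp only [etaF, sum_mul, sum_neg_distrib]
  -- The gap is the relative entropy of `w` with respect to the product of its marginals.
  have hpointwise := fun a b => sub_mul_le_mul_log_sub (hw a b)
    (single_le_sum (fun c _ => hw a c) (mem_univ b))
    (single_le_sum (fun c _ => hw c b) (mem_univ a))
  have hgap := sum_le_sum fun a (_ : a ∈ univ) => sum_le_sum fun b (_ : b ∈ univ) => hpointwise a b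
  simp only [sum_sub_distrib, hsum, hmarginals, sub_self] at hgap
  rw [hrow, hcol]
  simp only [etaF, sum_neg_distrib]
  linarith

section PartitionOfUnity

variable {Ω σ τ : Type*} [MeasurableSpace Ω] {μ : Measure Ω} [Fintype σ] [Fintype τ]

structure IsMeasurablePartitionOfUnity (F : σ → Ω → ℝ) : Prop where
  measurable : ∀ a, Measurable (F a)
  nonneg : ∀ a x, 0 ≤ F a x
  sum_eq_one : ∀ x, ∑ a, F a x = 1

variable (μ) in
def partitionEntropy (F : σ → Ω → ℝ) : ℝ :=
  ∑ a, etaF (∫ x, F a x ∂μ)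

theorem partitionEntropy_comp_equiv {σ' : Type*} [Fintype σ'] (e : σ' ≃ σ) (F : σ → Ω → ℝ) :
    partitionEntropy μ (F ∘ e) = partitionEntropy μ F :=
  e.sum_comp fun a => etaF (∫ x, F a x ∂μ)

namespace IsMeasurablePartitionOfUnity

variable {F : σ → Ω → ℝ} {G : τ → Ω → ℝ}

theorem le_one (hF : IsMeasurablePartitionOfUnity F) (a : σ) (x : Ω) : F a x ≤ 1 :=
  hF.sum_eq_one x ▸ single_le_sum (fun b _ => hF.nonneg b x) (mem_univ a)

theorem integrable [IsFiniteMeasure μ] (hF : IsMeasurablePartitionOfUnity F) (a : σ) :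
    Integrable (F a) μ :=
  (integrable_const (1 : ℝ)).mono' (hF.measurable a).aestronglyMeasurable <| ae_of_all _ fun x => by
    rw [Real.norm_of_nonneg (hF.nonneg a x)]
    exact hF.le_one a x

theorem sum_integral_eq_one [IsProbabilityMeasure μ] (hF : IsMeasurablePartitionOfUnity F) :
    ∑ a, ∫ x, F a x ∂μ = 1 := by
  rw [← integral_finsetSum _ fun a _ => hF.integrable a]
  simp [hF.sum_eq_one]

theorem join (hF : IsMeasurablePartitionOfUnity F) (hG : IsMeasurablePartitionOfUnity G) :
    IsMeasurablePartitionOfUnity fun p : σ × τ => fun x => F p.1 x * G p.2 x where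
  measurable p := (hF.measurable p.1).mul (hG.measurable p.2)
  nonneg p x := mul_nonneg (hF.nonneg p.1 x) (hG.nonneg p.2 x)
  sum_eq_one x := by
    rw [Fintype.sum_prod_type]
    dsimp only
    rw [← sum_mul_sum, hF.sum_eq_one, hG.sum_eq_one, one_mul]

end IsMeasurablePartitionOfUnity

theorem partitionEntropy_join_le [IsProbabilityMeasure μ] {F : σ → Ω → ℝ} {G : τ → Ω → ℝ}
    (hF : IsMeasurablePartitionOfUnity F) (hG : IsMeasurablePartitionOfUnity G) :
    partitionEntropy μ (fun p : σ × τ => fun x => F p.1 x * G p.2 x) ≤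
      partitionEntropy μ F + partitionEntropy μ G := by
  have hFG := hF.join hG
  set w : σ → τ → ℝ := fun a b => ∫ x, F a x * G b x ∂μ
  have hrow a : ∑ b, w a b = ∫ x, F a x ∂μ := by
    rw [← integral_finsetSum _ fun b _ => hFG.integrable (a, b)]
    simp only [← mul_sum, hG.sum_eq_one, mul_one]
  have hcol b : ∑ a, w a b = ∫ x, G b x ∂μ := by
    rw [← integral_finsetSum _ fun a _ => hFG.integrable (a, b)]
    simp only [← sum_mul, hF.sum_eq_one, one_mul]
  have hw a b : 0 ≤ w a b := integral_nonneg (hFG.nonneg (a, b))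
  have hsum : ∑ a, ∑ b, w a b = 1 := by
    simpa only [← Fintype.sum_prod_type'] using hFG.sum_integral_eq_one (μ := μ)
  simpa only [partitionEntropy, Fintype.sum_prod_type, hrow, hcol] using sum_sum_etaF_le w hw hsum

end PartitionOfUnity

section Words

variable {Ω κ : Type*} [MeasurableSpace Ω] {μ : Measure Ω} [Fintype κ]

def wordPartition {ι : Type*} [Fintype ι] (F : ι → κ → Ω → ℝ) (α : ι → κ) (x : Ω) : ℝ :=
  ∏ j, F j (α j) x

theorem IsMeasurablePartitionOfUnity.wordPartition {ι : Type*} [Fintype ι] [DecidableEq ι]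
    {F : ι → κ → Ω → ℝ} (hF : ∀ j, IsMeasurablePartitionOfUnity (F j)) :
    IsMeasurablePartitionOfUnity (wordPartition F) where
  measurable α := Finset.measurable_prod _ fun j _ => (hF j).measurable (α j)
  nonneg α x := prod_nonneg fun j _ => (hF j).nonneg (α j) x
  sum_eq_one x := by
    simp only [_root_.wordPartition]
    rw [← Fintype.prod_sum fun j k => F j k x]
    simp only [(hF _).sum_eq_one, prod_const_one]

theorem partitionEntropy_wordPartition_comp_equiv {ι ι' : Type*} [Fintype ι] [DecidableEq ι]
    [Fintype ι'] [DecidableEq ι']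
    (e : ι' ≃ ι) (F : ι → κ → Ω → ℝ) :
    partitionEntropy μ (wordPartition (F ∘ e)) = partitionEntropy μ (wordPartition F) := by
  rw [← partitionEntropy_comp_equiv (e.arrowCongr (Equiv.refl κ)).symm]
  congr 1
  ext α x
  simp only [Function.comp_apply, wordPartition, Equiv.arrowCongr_symm, Equiv.arrowCongr_apply]
  exact e.prod_comp fun j => F j (α j) x

theorem partitionEntropy_wordPartition_sum_le [IsProbabilityMeasure μ] {ι₁ ι₂ : Type*}
    [Fintype ι₁] [DecidableEq ι₁] [Fintype ι₂] [DecidableEq ι₂] {F : ι₁ ⊕ ι₂ → κ → Ω → ℝ}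
    (hF : ∀ j, IsMeasurablePartitionOfUnity (F j)) :
    partitionEntropy μ (wordPartition F) ≤
      partitionEntropy μ (wordPartition (F ∘ Sum.inl)) +
        partitionEntropy μ (wordPartition (F ∘ Sum.inr)) := by
  have hsplit : wordPartition F ∘ (Equiv.sumArrowEquivProdArrow ι₁ ι₂ κ).symm =
      fun p x => wordPartition (F ∘ Sum.inl) p.1 x * wordPartition (F ∘ Sum.inr) p.2 x := by
    ext p x
    exact Fintype.prod_sum_type _
  rw [← partitionEntropy_comp_equiv (Equiv.sumArrowEquivProdArrow ι₁ ι₂ κ).symm, hsplit]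
  exact partitionEntropy_join_le (.wordPartition fun j => hF _) (.wordPartition fun j => hF _)

variable (μ) in
def blockEntropy (S : ℤ → κ → Ω → ℝ) (a : ℤ) (n : ℕ) : ℝ :=
  partitionEntropy μ (wordPartition fun j : Fin n => S (a + j))

variable [IsProbabilityMeasure μ] {S : ℤ → κ → Ω → ℝ}

theorem blockEntropy_zero (S : ℤ → κ → Ω → ℝ) (a : ℤ) : blockEntropy μ S a 0 = 0 := by
  simp [blockEntropy, partitionEntropy, wordPartition, etaF]

theorem blockEntropy_add_le (hS : ∀ k, IsMeasurablePartitionOfUnity (S k)) (a : ℤ) (n₁ n₂ : ℕ) :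
    blockEntropy μ S a (n₁ + n₂) ≤ blockEntropy μ S a n₁ + blockEntropy μ S (a + n₁) n₂ := by
  rw [blockEntropy, ← partitionEntropy_wordPartition_comp_equiv finSumFinEquiv]
  refine (partitionEntropy_wordPartition_sum_le fun j => hS _).trans_eq ?_
  simp only [blockEntropy]
  congr 3
  ext j
  simp [add_assoc]

theorem blockEntropy_mul_le (hS : ∀ k, IsMeasurablePartitionOfUnity (S k)) (a : ℤ) (n q : ℕ) :
    blockEntropy μ S a (n * q) ≤ ∑ k ∈ range q, blockEntropy μ S (a + n * k) n := by
  induction q with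
  | zero => simp [blockEntropy_zero]
  | succ q ih =>
    rw [mul_add_one, sum_range_succ]
    exact (blockEntropy_add_le hS a _ n).trans (by push_cast; gcongr)

end Words

section Torus

variable {d K : ℕ}

theorem continuous_tmap (M : Matrix (Fin (2 * d)) (Fin (2 * d)) ℤ) : Continuous (tmap M) :=
  continuous_pi fun i => continuous_finsetSum _ fun j _ =>
    (continuous_zsmul (M i j)).comp (continuous_apply j)

def iteratedPartition (A : (Matrix (Fin (2 * d)) (Fin (2 * d)) ℤ)ˣ) (P : Fin K → Torus d → ℝ)
    (k : ℤ) (i : Fin K) (x : Torus d) : ℝ :=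
  P i (tmap ((A ^ k : (Matrix (Fin (2 * d)) (Fin (2 * d)) ℤ)ˣ) :
    Matrix (Fin (2 * d)) (Fin (2 * d)) ℤ) x) ^ 2

theorem isMeasurablePartitionOfUnity_iteratedPartition
    {A : (Matrix (Fin (2 * d)) (Fin (2 * d)) ℤ)ˣ} {P : Fin K → Torus d → ℝ}
    (hcont : ∀ i, Continuous (P i)) (hpart : ∀ x, ∑ i, (P i x) ^ 2 = 1) (k : ℤ) :
    IsMeasurablePartitionOfUnity (iteratedPartition A P k) where
  measurable i := (((hcont i).comp (continuous_tmap _)).pow 2).measurable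
  nonneg _ _ := sq_nonneg _
  sum_eq_one _ := hpart _

theorem transEnt_eq_blockEntropy (μ : Measure (Torus d))
    (A : (Matrix (Fin (2 * d)) (Fin (2 * d)) ℤ)ˣ) (P : Fin K → Torus d → ℝ) (m : ℕ) (p : ℤ) :
    transEnt μ A P m p = blockEntropy μ (iteratedPartition A P) (p - m) (2 * m) := by
  simp only [transEnt, blockEntropy, partitionEntropy, wordPartition, iteratedPartition]
  simp_rw [sub_add_comm]

end Torus

theorem translated_entropy_iterated_subadditive_general
    {d K : ℕ} (μ : Measure (Torus d)) [IsProbabilityMeasure μ]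
    (A : (Matrix (Fin (2 * d)) (Fin (2 * d)) ℤ)ˣ)
    (P : Fin K → Torus d → ℝ)
    (hcont : ∀ i, Continuous (P i))
    (hpart : ∀ x, ∑ i, (P i x) ^ 2 = 1)
    (m₀ q r : ℕ) :
    transEnt μ A P (q * m₀ + r) 0
      ≤ transEnt μ A P r (-(q * m₀ : ℤ)) +
          ∑ j ∈ Finset.Icc (1 : ℤ) (q : ℤ),
            transEnt μ A P m₀ (-((q : ℤ) + 1 - 2 * j) * (m₀ : ℤ) + (r : ℤ)) := by
  have hS := isMeasurablePartitionOfUnity_iteratedPartition (A := A) hcont hpart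
  simp only [transEnt_eq_blockEntropy]
  rw [show 2 * (q * m₀ + r) = 2 * r + 2 * m₀ * q by ring]
  refine (blockEntropy_add_le hS _ _ _).trans (add_le_add (le_of_eq ?_)
    ((blockEntropy_mul_le hS _ _ _).trans_eq ?_))
  · congr 1
    push_cast
    ring
  · rw [Int.Icc_eq_finset_map, sum_map]
    refine sum_congr (by simp) fun k _ => ?_
    congr 1
    simp only [Function.Embedding.trans_apply, Nat.castEmbedding_apply, addLeftEmbedding_apply]
    push_cast
    ring

/-- **Iterated subadditivity of translated entropies**: for `m = q m₀ + r`,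
`h_{2m}(μ) ≤ h_{2r}^{-q m₀}(μ) + ∑_{j=1}^{q} h_{2m₀}^{-(q+1-2j)m₀ + r}(μ)`. -/
theorem translated_entropy_iterated_subadditive
    {d K : ℕ} (μ : Measure (Torus d)) [IsProbabilityMeasure μ]
    (A : (Matrix (Fin (2 * d)) (Fin (2 * d)) ℤ)ˣ)
    (P : Fin K → Torus d → ℝ)
    (hcont : ∀ i, Continuous (P i))
    (hrange : ∀ i x, P i x ∈ Set.Icc (0 : ℝ) 1)
    (hpart : ∀ x, ∑ i, (P i x) ^ 2 = 1)
    (m₀ q r : ℕ) (hm₀ : 1 ≤ m₀) (hq : 1 ≤ q) (hr : r < m₀) :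
    transEnt μ A P (q * m₀ + r) 0
      ≤ transEnt μ A P r (-(q * m₀ : ℤ)) +
          ∑ j ∈ Finset.Icc (1 : ℤ) (q : ℤ),
            transEnt μ A P m₀ (-((q : ℤ) + 1 - 2 * j) * (m₀ : ℤ) + (r : ℤ)) :=
  translated_entropy_iterated_subadditive_general μ A P hcont hpart m₀ q r
end
end

section
/- Subexponential growth for matrices with unimodular spectrum: Let M be an invertible real k×k matrix all of whose complex eigenvalues have modulus 1. Then for every ε > 0 there exists C ≥ 1 such that for every integer n ≥ 0 and every v ∈ R^k, C^{−1} e^{−nε} ‖v‖ ≤ ‖M^n v‖ ≤ C e^{nε} ‖v‖, where ‖·‖ is the Euclidean norm. -/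
/-!
By Gelfand's formula `‖Aⁿ‖^(1/n)` tends to the spectral radius of `A`, so a spectral radius at
most `1` gives `‖Aⁿ‖ ≤ C e^{nε}`. A spectrum on the unit circle misses `0`, so `A` is invertible,
and the spectrum of `A⁻¹` consists of the inverses of the eigenvalues, again on the unit circle.
Applying the bound to `A` and `A⁻¹` (via `v = A⁻ⁿ Aⁿ v`) yields both inequalities for the
complexification of `M` acting on `ℂ^k`, which restricts isometrically to `ℝ^k`.
-/

open Filter

section BanachAlgebra

variable {𝔸 : Type*} [NormedRing 𝔸] [NormedAlgebra ℂ 𝔸] [CompleteSpace 𝔸]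

theorem exists_norm_pow_le_mul_pow_of_spectralRadius_lt {a : 𝔸} {r : ℝ}
    (h : spectralRadius ℂ a < ENNReal.ofReal r) : ∃ C, ∀ n : ℕ, ‖a ^ n‖ ≤ C * r ^ n := by
  have hr : 0 < r := ENNReal.ofReal_pos.mp (pos_of_gt h)
  have hev : ∀ᶠ n : ℕ in atTop, ‖a ^ n‖ / r ^ n ≤ 1 := by
    filter_upwards
      [(spectrum.pow_norm_pow_one_div_tendsto_nhds_spectralRadius a).eventually_lt_const h,
        eventually_gt_atTop 0] with n hn hn0
    have hroot : ‖a ^ n‖ ^ (n : ℝ)⁻¹ < r := by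
      rw [← one_div]
      exact (ENNReal.ofReal_lt_ofReal_iff hr).mp hn
    rw [Real.rpow_inv_lt_iff_of_pos (norm_nonneg _) hr.le (by positivity), Real.rpow_natCast]
      at hroot
    exact (div_le_one (by positivity)).mpr hroot.le
  obtain ⟨C, hC⟩ := (isBoundedUnder_of_eventually_le hev).bddAbove_range
  exact ⟨C, fun n => (div_le_iff₀ (by positivity)).mp (hC ⟨n, rfl⟩)⟩

theorem exists_norm_pow_le_mul_exp_of_norm_spectrum_le_one {a : 𝔸}
    (h : ∀ z ∈ spectrum ℂ a, ‖z‖ ≤ 1) {ε : ℝ} (hε : 0 < ε) :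
    ∃ C, ∀ n : ℕ, ‖a ^ n‖ ≤ C * Real.exp (n * ε) := by
  have hρ : spectralRadius ℂ a < ENNReal.ofReal (Real.exp ε) :=
    calc spectralRadius ℂ a ≤ 1 :=
          iSup₂_le fun z hz => by simpa [← NNReal.coe_le_one] using h z hz
      _ < ENNReal.ofReal (Real.exp ε) := by simpa using Real.one_lt_exp_iff.mpr hε
  simpa [Real.exp_nat_mul] using exists_norm_pow_le_mul_pow_of_spectralRadius_lt hρ

end BanachAlgebra

section UnitCircle

variable {𝕜 A : Type*} [NormedField 𝕜] [Ring A] [Algebra 𝕜 A]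

theorem isUnit_of_norm_spectrum_eq_one {a : A} (h : ∀ z ∈ spectrum 𝕜 a, ‖z‖ = 1) : IsUnit a :=
  (spectrum.zero_notMem_iff 𝕜).mp fun h0 => by simpa using h 0 h0

theorem norm_spectrum_inv_eq_one {u : Aˣ} (h : ∀ z ∈ spectrum 𝕜 (u : A), ‖z‖ = 1) :
    ∀ z ∈ spectrum 𝕜 (↑u⁻¹ : A), ‖z‖ = 1 := by
  rw [← spectrum.map_inv]
  intro z hz
  simpa using h _ (Set.mem_inv.mp hz)

end UnitCircle

theorem ContinuousLinearMap.exists_norm_pow_apply_bounds_of_norm_spectrum_eq_one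
    {E : Type*} [NormedAddCommGroup E] [NormedSpace ℂ E] [CompleteSpace E] {T : E →L[ℂ] E}
    (h : ∀ z ∈ spectrum ℂ T, ‖z‖ = 1) {ε : ℝ} (hε : 0 < ε) :
    ∃ C, 1 ≤ C ∧ ∀ (n : ℕ) (x : E),
      ‖x‖ ≤ C * Real.exp (n * ε) * ‖(T ^ n) x‖ ∧ ‖(T ^ n) x‖ ≤ C * Real.exp (n * ε) * ‖x‖ := by
  obtain ⟨u, rfl⟩ := isUnit_of_norm_spectrum_eq_one h
  obtain ⟨C₁, hC₁⟩ :=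
    exists_norm_pow_le_mul_exp_of_norm_spectrum_le_one (fun z hz => (h z hz).le) hε
  obtain ⟨C₂, hC₂⟩ := exists_norm_pow_le_mul_exp_of_norm_spectrum_le_one
    (fun z hz => (norm_spectrum_inv_eq_one h z hz).le) hε
  refine ⟨max 1 (max C₁ C₂), le_max_left _ _, fun n x => ⟨?_, ?_⟩⟩
  · have hx : x = ((↑u⁻¹ : E →L[ℂ] E) ^ n) (((u : E →L[ℂ] E) ^ n) x) := by
      rw [← mul_apply_eq_comp, ← Units.val_pow_eq_pow_val, ← Units.val_pow_eq_pow_val,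
        ← Units.val_mul, inv_pow, inv_mul_cancel, Units.val_one, one_apply_eq_self]
    calc ‖x‖ = ‖((↑u⁻¹ : E →L[ℂ] E) ^ n) (((u : E →L[ℂ] E) ^ n) x)‖ := congrArg _ hx
      _ ≤ ‖(↑u⁻¹ : E →L[ℂ] E) ^ n‖ * ‖((u : E →L[ℂ] E) ^ n) x‖ := le_opNorm _ _
      _ ≤ max 1 (max C₁ C₂) * Real.exp (n * ε) * ‖((u : E →L[ℂ] E) ^ n) x‖ := by
          gcongr
          exact (hC₂ n).trans (by gcongr; exact le_max_of_le_right (le_max_right _ _))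
  · calc ‖((u : E →L[ℂ] E) ^ n) x‖ ≤ ‖(u : E →L[ℂ] E) ^ n‖ * ‖x‖ := le_opNorm _ _
      _ ≤ max 1 (max C₁ C₂) * Real.exp (n * ε) * ‖x‖ := by
          gcongr
          exact (hC₁ n).trans (by gcongr; exact le_max_of_le_right (le_max_left _ _))

theorem EuclideanSpace.norm_toLp_ofReal {ι : Type*} [Fintype ι] (y : ι → ℝ) :
    ‖WithLp.toLp 2 (fun i => (y i : ℂ))‖ = √(∑ i, y i ^ 2) := by
  simp [EuclideanSpace.norm_eq]

theorem Matrix.toEuclideanCLM_map_ofReal_pow_apply {ι : Type*} [Fintype ι] [DecidableEq ι]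
    (M : Matrix ι ι ℝ) (n : ℕ) (v : ι → ℝ) :
    (toEuclideanCLM (𝕜 := ℂ) (M.map (algebraMap ℝ ℂ)) ^ n) (WithLp.toLp 2 fun i => (v i : ℂ)) =
      WithLp.toLp 2 fun i => ((M ^ n).mulVec v i : ℂ) := by
  rw [← map_pow, ← Matrix.map_pow, Matrix.toEuclideanCLM_toLp]
  congr 1
  funext i
  exact (RingHom.map_mulVec (algebraMap ℝ ℂ) (M ^ n) v i).symm

theorem subexponential_growth_unimodular_spectrum_general
    {k : ℕ} (M : Matrix (Fin k) (Fin k) ℝ)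
    (hspec : ∀ z ∈ ((M.map (algebraMap ℝ ℂ)).charpoly).roots, ‖z‖ = 1) :
    ∀ ε : ℝ, 0 < ε → ∃ C : ℝ, 1 ≤ C ∧ ∀ n : ℕ, ∀ v : Fin k → ℝ,
      C⁻¹ * Real.exp (-(n * ε)) * Real.sqrt (∑ i, v i ^ 2)
          ≤ Real.sqrt (∑ i, ((M ^ n).mulVec v i) ^ 2) ∧
      Real.sqrt (∑ i, ((M ^ n).mulVec v i) ^ 2)
          ≤ C * Real.exp (n * ε) * Real.sqrt (∑ i, v i ^ 2) := by
  intro ε hε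
  set T := Matrix.toEuclideanCLM (𝕜 := ℂ) (M.map (algebraMap ℝ ℂ))
  have hT : ∀ z ∈ spectrum ℂ T, ‖z‖ = 1 := fun z hz => by
    rw [AlgEquiv.spectrum_eq, Matrix.mem_spectrum_iff_isRoot_charpoly] at hz
    exact hspec z ((Polynomial.mem_roots (Matrix.charpoly_monic _).ne_zero).mpr hz)
  obtain ⟨C, hC1, hC⟩ := T.exists_norm_pow_apply_bounds_of_norm_spectrum_eq_one hT hε
  refine ⟨C, hC1, fun n v => ?_⟩
  obtain ⟨hlow, hup⟩ := hC n (WithLp.toLp 2 fun i => (v i : ℂ))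
  simp only [T, Matrix.toEuclideanCLM_map_ofReal_pow_apply, EuclideanSpace.norm_toLp_ofReal]
    at hlow hup
  refine ⟨?_, hup⟩
  calc C⁻¹ * Real.exp (-(n * ε)) * √(∑ i, v i ^ 2)
      ≤ C⁻¹ * Real.exp (-(n * ε)) * (C * Real.exp (n * ε) * √(∑ i, (M ^ n).mulVec v i ^ 2)) := by
        gcongr
    _ = √(∑ i, (M ^ n).mulVec v i ^ 2) := by
        rw [Real.exp_neg]
        field_simp

/-- **Subexponential growth for matrices with unimodular spectrum.**
If all complex eigenvalues of an invertible real `k × k` matrix `M` have modulus `1`,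
then for every `ε > 0` there is `C ≥ 1` with
`C⁻¹ e^{-nε} ‖v‖ ≤ ‖Mⁿ v‖ ≤ C e^{nε} ‖v‖` for all `n ≥ 0` and all `v ∈ ℝ^k`. -/
theorem subexponential_growth_unimodular_spectrum
    {k : ℕ} (M : Matrix (Fin k) (Fin k) ℝ) (hM : IsUnit M.det)
    (hspec : ∀ z ∈ ((M.map (algebraMap ℝ ℂ)).charpoly).roots, ‖z‖ = 1) :
    ∀ ε : ℝ, 0 < ε → ∃ C : ℝ, 1 ≤ C ∧ ∀ n : ℕ, ∀ v : Fin k → ℝ,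
      C⁻¹ * Real.exp (-(n * ε)) * Real.sqrt (∑ i, v i ^ 2)
          ≤ Real.sqrt (∑ i, ((M ^ n).mulVec v i) ^ 2) ∧
      Real.sqrt (∑ i, ((M ^ n).mulVec v i) ^ 2)
          ≤ C * Real.exp (n * ε) * Real.sqrt (∑ i, v i ^ 2) :=
  subexponential_growth_unimodular_spectrum_general M hspec
end

section
/- Ergodic integer matrices have an expanding eigenvalue (Kronecker): Let A ∈ GL(2d,Z) (an integer matrix with determinant ±1) such that no complex eigenvalue of A is a root of unity. Then A has a complex eigenvalue β with |β| > 1; equivalently, λ_max := max{ log|β| : β an eigenvalue of A } > 0. -/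
/-!
The characteristic polynomial of `A` is monic of positive degree with integer coefficients, and since
`det A = ±1` its complex roots are nonzero. If they all lay in the closed unit disk, it would have
Mahler measure `1`, and Kronecker's theorem would make each of them a root of unity.
-/

open Polynomial

namespace Polynomial

theorem Monic.mahlerMeasure_eq_one_of_norm_root_le_one {p : ℂ[X]} (hp : p.Monic)
    (h : ∀ z ∈ p.roots, ‖z‖ ≤ 1) : p.mahlerMeasure = 1 := by
  rw [mahlerMeasure_eq_leadingCoeff_mul_prod_roots, hp.leadingCoeff, norm_one, one_mul]
  refine Multiset.prod_eq_one fun x hx ↦ ?_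
  obtain ⟨z, hz, rfl⟩ := Multiset.mem_map.1 hx
  exact max_eq_left (h z hz)

theorem Monic.exists_one_lt_norm_mem_aroots {p : ℤ[X]} (hp : p.Monic) {z : ℂ}
    (hz : z ∈ p.aroots ℂ) (hz₀ : z ≠ 0) (hz_pow : ∀ n, 0 < n → z ^ n ≠ 1) :
    ∃ β ∈ p.aroots ℂ, 1 < ‖β‖ := by
  by_contra! h
  have hmahler : (p.map (Int.castRingHom ℂ)).mahlerMeasure = 1 :=
    (hp.map _).mahlerMeasure_eq_one_of_norm_root_le_one h
  obtain ⟨n, hn, hzn⟩ := pow_eq_one_of_mahlerMeasure_eq_one hmahler hz₀ hz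
  exact hz_pow n hn hzn

end Polynomial

namespace Matrix

theorem isRoot_charpoly_zero_iff {R n : Type*} [CommRing R] [Fintype n] [DecidableEq n]
    (M : Matrix n n R) : M.charpoly.IsRoot 0 ↔ M.det = 0 := by
  rw [IsRoot, ← coeff_zero_eq_eval_zero, det_eq_sign_charpoly_coeff]
  simp

end Matrix

/-- **Ergodic integer matrices have an expanding eigenvalue (Kronecker).**
If `A ∈ GL(2d, ℤ)` (with `d ≥ 1`) has no complex eigenvalue that is a root of unity,
then `A` has a complex eigenvalue `β` with `|β| > 1`. -/
theorem ergodic_integer_matrix_has_expanding_eigenvalue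
    {d : ℕ} (hd : 0 < d) (A : Matrix (Fin (2 * d)) (Fin (2 * d)) ℤ)
    (hA : IsUnit A.det)
    (hroots : ∀ z ∈ ((A.map (algebraMap ℤ ℂ)).charpoly).roots,
      ∀ k : ℕ, 1 ≤ k → z ^ k ≠ 1) :
    ∃ β ∈ ((A.map (algebraMap ℤ ℂ)).charpoly).roots, 1 < ‖β‖ := by
  set B := A.map (algebraMap ℤ ℂ)
  obtain ⟨z, hz⟩ : ∃ z, z ∈ B.charpoly.roots := by
    have hdeg : B.charpoly.degree ≠ 0 := by
      rw [Matrix.charpoly_degree_eq_dim, Fintype.card_fin]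
      exact_mod_cast (by omega : 2 * d ≠ 0)
    obtain ⟨z, hz⟩ := IsAlgClosed.exists_root _ hdeg
    exact ⟨z, (mem_roots B.charpoly_monic.ne_zero).2 hz⟩
  have hz₀ : z ≠ 0 := by
    rintro rfl
    have hB : IsUnit B.det := (RingHom.map_det (algebraMap ℤ ℂ) A) ▸ hA.map _
    exact hB.ne_zero ((B.isRoot_charpoly_zero_iff).1 (isRoot_of_mem_roots hz))
  rw [Matrix.charpoly_map] at hz hroots ⊢
  exact A.charpoly_monic.exists_one_lt_norm_mem_aroots hz hz₀ fun n hn ↦ hroots z hz n hn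
end
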